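/- Let μ, r̂ > 0, 0 < α < 1, let L ≥ 1 be an integer, let r > 0, and let N ≥ 1 be an integer. Then the truncation error of the sum-CDF series, ε_F = (α·μ^μ/(Γ(μ)·r̂^{αμ}))^L · ∑_{i=N}^∞ δ_i · r^{αi + αμL}/Γ(αi + αμL + 1), satisfies |ε_F| < (α·μ^μ·Γ(αμ)·(r/r̂)^{αμ}/Γ(μ))^L · ∑_{i=N}^∞ (2·μ·L·(r/r̂)^α·Γ(α(1+μ)))^i / Γ(iα + Lαμ + 1), i.e., it is bounded by the corresponding tail of the Mittag-Leffler series E_{α, αμL+1} evaluated at 2·μ·L·(r/r̂)^α·Γ(α(1+μ)), scaled by (α·μ^μ·Γ(αμ)·(r/r̂)^{αμ}/Γ(μ))^L. -/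

import Mathlib

/-!
The coefficients `δ_i` are the Taylor coefficients of `ψ ^ L`, where
`ψ(z) = ∑ₗ Γ(α(l + μ)) (-c z)ˡ / l!` and `c = μ r̂^(-α)`: Miller's recurrence for the
coefficients of a power of a power series is exactly the defining recursion of `δ_i`.
Log-convexity of `Γ` (Wendel's inequality `Γ(t + α) ≤ t^α Γ(t)`) and `Γ ≥ 3/4` on `(0, ∞)` give
`|ψₗ| ≤ Γ(αμ) (4/3 · Γ(α(1 + μ)) c)ˡ`, hence `|δ_i| ≤ Γ(αμ)^L (4/3 · L Γ(α(1 + μ)) c)^i`.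
Each term of the tail is therefore at most `(2/3)^i` times the corresponding Mittag-Leffler term,
which makes the inequality strict; the Mittag-Leffler series converges by the ratio test, since
`Γ(t + α) ≥ t^α Γ(t) / 2`.
-/

open Real PowerSeries
open scoped Nat

noncomputable def deltaCoef (α μ rh : ℝ) (L : ℕ) : ℕ → ℝ
  | 0 => Real.Gamma (α * μ) ^ L
  | (i + 1) =>
      (1 / (((i : ℝ) + 1) * Real.Gamma (α * μ))) *
        ∑ l ∈ Finset.range (i + 1),
          deltaCoef α μ rh L (i - l) *
            ((((l : ℝ) + 1) * (L : ℝ) + ((l : ℝ) + 1) - ((i : ℝ) + 1)) *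
              Real.Gamma (α * (((l : ℝ) + 1) + μ)) *
              (-μ * rh ^ (-α)) ^ (l + 1) / (Nat.factorial (l + 1) : ℝ))
  termination_by i => i
  decreasing_by omega

theorem Gamma_add_le_rpow_mul_Gamma {t a : ℝ} (ht : 0 < t) (ha0 : 0 < a) (ha1 : a < 1) :
    Gamma (t + a) ≤ t ^ a * Gamma t := by
  have hΓ := Gamma_pos_of_pos ht
  calc Gamma (t + a) = Gamma ((1 - a) * t + a * (t + 1)) := by ring_nf
    _ ≤ Gamma t ^ (1 - a) * Gamma (t + 1) ^ a :=
      Gamma_mul_add_mul_le_rpow_Gamma_mul_rpow_Gamma ht (by positivity) (by linarith) ha0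
        (by ring)
    _ = t ^ a * Gamma t := by
      rw [Gamma_add_one ht.ne', mul_rpow ht.le hΓ.le, mul_left_comm, ← rpow_add hΓ,
        sub_add_cancel, rpow_one]

theorem rpow_mul_Gamma_le_two_mul_Gamma_add {t a : ℝ} (ha0 : 0 < a) (ha1 : a < 1) (hat : a ≤ t) :
    t ^ a * Gamma t ≤ 2 * Gamma (t + a) := by
  have ht : 0 < t := ha0.trans_le hat
  have hΓ := Gamma_pos_of_pos (by linarith : 0 < t + a)
  -- `Γ(t + 1) = Γ((t + a) + (1 - a))` is bounded by the upper inequality at `t + a`.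
  have hupper : t * Gamma t ≤ (t + a) ^ (1 - a) * Gamma (t + a) := by
    rw [← Gamma_add_one ht.ne']
    simpa using Gamma_add_le_rpow_mul_Gamma (t := t + a) (by linarith) (by linarith)
      (by linarith : 1 - a < 1)
  have hbase : (t + a) ^ (1 - a) ≤ 2 * t ^ (1 - a) :=
    calc (t + a) ^ (1 - a) ≤ (2 * t) ^ (1 - a) := by gcongr; linarith
      _ = 2 ^ (1 - a) * t ^ (1 - a) := mul_rpow (by norm_num) ht.le
      _ ≤ 2 * t ^ (1 - a) := by
        gcongr
        simpa using rpow_le_rpow_of_exponent_le (by norm_num : (1 : ℝ) ≤ 2) (by linarith : 1 - a ≤ 1)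
  have hpos : 0 < t ^ (1 - a) := rpow_pos_of_pos ht _
  refine le_of_mul_le_mul_left ?_ hpos
  calc t ^ (1 - a) * (t ^ a * Gamma t) = t * Gamma t := by
        rw [← mul_assoc, ← rpow_add ht, sub_add_cancel, rpow_one]
    _ ≤ 2 * t ^ (1 - a) * Gamma (t + a) := hupper.trans (by gcongr)
    _ = t ^ (1 - a) * (2 * Gamma (t + a)) := by ring

theorem summable_pow_div_Gamma_mul_add (K : ℝ) {a b : ℝ} (ha0 : 0 < a) (ha1 : a < 1)
    (hb : 0 < b) : Summable fun n : ℕ => K ^ n / Gamma (n * a + b) := by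
  have ht : Filter.Tendsto (fun n : ℕ => (n : ℝ) * a + b) Filter.atTop Filter.atTop :=
    Filter.tendsto_atTop_add_const_right _ b
      (tendsto_natCast_atTop_atTop.atTop_mul_const ha0)
  refine summable_of_ratio_norm_eventually_le (r := 1 / 2) (by norm_num) ?_
  filter_upwards [ht.eventually_ge_atTop a,
    ((tendsto_rpow_atTop ha0).comp ht).eventually_ge_atTop (4 * |K|)] with n hat hK
  set t := (n : ℝ) * a + b
  have hΓ := Gamma_pos_of_pos (ha0.trans_le hat)
  have hΓa := Gamma_pos_of_pos (by linarith : 0 < t + a)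
  have hratio : 2 * |K| * Gamma t ≤ Gamma (t + a) := by
    have := rpow_mul_Gamma_le_two_mul_Gamma_add ha0 ha1 hat
    simp only [Function.comp_apply] at hK
    nlinarith
  have hstep : ((n + 1 : ℕ) : ℝ) * a + b = t + a := by push_cast; ring
  simp only [hstep, norm_div, norm_pow, Real.norm_eq_abs, abs_of_pos hΓ, abs_of_pos hΓa]
  rw [div_le_iff₀ hΓa, pow_succ]
  calc |K| ^ n * |K| = 1 / 2 * (|K| ^ n / Gamma t) * (2 * |K| * Gamma t) := by
        field_simp
    _ ≤ 1 / 2 * (|K| ^ n / Gamma t) * Gamma (t + a) := by gcongr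

theorem seven_eighths_le_Gamma_three_halves : 7 / 8 ≤ Gamma (3 / 2) := by
  have h : Gamma (3 / 2) = √π / 2 := by
    rw [show (3 / 2 : ℝ) = 1 / 2 + 1 by norm_num, Gamma_add_one (by norm_num),
      Gamma_one_half_eq]
    ring
  have hπ : (7 / 4) ^ 2 ≤ π := by linarith [pi_gt_d2]
  rw [h]
  linarith [le_sqrt_of_sq_le hπ]

theorem three_quarters_le_Gamma_of_chord {x y θ : ℝ} (hx : 0 < x) (hy : 0 < y)
    (hΓy : Gamma y = 1) (hθ : 1 / 2 ≤ θ) (hθ1 : θ ≤ 1) (hchord : θ * x + (1 - θ) * y = 3 / 2) :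
    3 / 4 ≤ Gamma x := by
  have hconv := convexOn_Gamma.2 hx hy (by linarith) (by linarith) (add_sub_cancel θ 1)
  simp only [smul_eq_mul, hchord, hΓy] at hconv
  nlinarith [seven_eighths_le_Gamma_three_halves]

theorem three_quarters_le_Gamma {x : ℝ} (hx : 0 < x) : 3 / 4 ≤ Gamma x := by
  rcases le_or_gt x 1 with h1 | h1
  · have := Gamma_strictAntiOn_Ioc.antitoneOn ⟨hx, h1⟩ ⟨one_pos, le_rfl⟩ h1
    linarith [Gamma_one]
  rcases le_or_gt 2 x with h2 | h2
  · have := Gamma_strictMonoOn_Ici.monotoneOn Set.self_mem_Ici h2 h2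
    linarith [Gamma_two]
  rcases le_or_gt x (3 / 2) with h3 | h3
  · exact three_quarters_le_Gamma_of_chord (y := 2) (θ := 1 / (2 * (2 - x))) hx two_pos Gamma_two
      (by rw [div_le_div_iff₀] <;> nlinarith) (by rw [div_le_one] <;> nlinarith)
      (by field_simp; ring)
  · exact three_quarters_le_Gamma_of_chord (y := 1) (θ := 1 / (2 * (x - 1))) hx one_pos Gamma_one
      (by rw [div_le_div_iff₀] <;> nlinarith) (by rw [div_le_one] <;> nlinarith)
      (by field_simp; ring)

theorem max_one_half_le_Gamma {x : ℝ} (hx : 0 < x) : max 1 (x / 2) ≤ 4 / 3 * Gamma x := by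
  refine max_le (by linarith [three_quarters_le_Gamma hx]) ?_
  rcases le_or_gt x 2 with h2 | h2
  · linarith [three_quarters_le_Gamma hx]
  · have hrec : Gamma x = (x - 1) * Gamma (x - 1) := by
      rw [← Gamma_add_one (by linarith), sub_add_cancel]
    nlinarith [three_quarters_le_Gamma (by linarith : 0 < x - 1)]

theorem rpow_le_max_one {y a : ℝ} (hy : 0 ≤ y) (ha0 : 0 ≤ a) (ha1 : a ≤ 1) : y ^ a ≤ max 1 y := by
  rcases le_or_gt y 1 with h | h
  · exact (rpow_le_one hy h ha0).trans (le_max_left _ _)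
  · exact (rpow_le_self_of_one_le h.le ha1).trans (le_max_right _ _)

theorem rpow_add_mul_le_mul_Gamma {x a : ℝ} (hx : 0 < x) (ha0 : 0 ≤ a) (ha1 : a ≤ 1) (m : ℕ) :
    (x + m * a) ^ a ≤ (m + 2) * (4 / 3 * Gamma x) := by
  have hm : (0 : ℝ) ≤ m := m.cast_nonneg
  have hma : m * a ≤ m := mul_le_of_le_one_right hm ha1
  calc (x + m * a) ^ a ≤ max 1 (x + m * a) := rpow_le_max_one (by positivity) ha0 ha1
    _ ≤ (m + 2) * max 1 (x / 2) := by
      have h1 := le_max_left 1 (x / 2)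
      have h2 := le_max_right 1 (x / 2)
      refine max_le (by nlinarith) (by nlinarith)
    _ ≤ (m + 2) * (4 / 3 * Gamma x) := by gcongr; exact max_one_half_le_Gamma hx

theorem Gamma_add_mul_le {x a : ℝ} (hx : 0 < x) (ha0 : 0 < a) (ha1 : a < 1) (m : ℕ) :
    Gamma (x + m * a) ≤ (m + 1)! * (4 / 3 * Gamma x) ^ m * Gamma x := by
  induction m with
  | zero => simp
  | succ m ih =>
    have hpos : 0 < x + m * a := by positivity
    calc Gamma (x + (m + 1 : ℕ) * a) = Gamma (x + m * a + a) := by push_cast; ring_nf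
      _ ≤ (x + m * a) ^ a * Gamma (x + m * a) := Gamma_add_le_rpow_mul_Gamma hpos ha0 ha1
      _ ≤ ((m + 2) * (4 / 3 * Gamma x)) * ((m + 1)! * (4 / 3 * Gamma x) ^ m * Gamma x) := by
        gcongr
        exact rpow_add_mul_le_mul_Gamma hx ha0.le ha1.le m
      _ = (m + 1 + 1)! * (4 / 3 * Gamma x) ^ (m + 1) * Gamma x := by
        rw [Nat.factorial_succ (m + 1)]; push_cast; ring

namespace PowerSeries

variable {R : Type*} [CommRing R]

theorem mul_derivative_pow (f : R⟦X⟧) (n : ℕ) :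
    f * d⁄dX R (f ^ n) = n • (d⁄dX R f * f ^ n) := by
  rcases n with _ | n
  · simp
  · rw [Derivation.leibniz_pow, smul_eq_mul, pow_succ]
    simp only [Nat.add_sub_cancel, nsmul_eq_mul]
    ring

theorem coeff_X_mul_derivative (f : R⟦X⟧) (n : ℕ) :
    coeff n (X * d⁄dX R f) = n * coeff n f := by
  rcases n with _ | n
  · simp
  · rw [coeff_succ_X_mul, coeff_derivative]; push_cast; ring

-- J. C. P. Miller's recurrence for the coefficients of a power of a power series; it comes from
-- comparing coefficients in `f · X (f ^ L)' = L · X f' · f ^ L`.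
theorem coeff_succ_pow_recurrence (f : R⟦X⟧) (L i : ℕ) :
    ((i : R) + 1) * constantCoeff f * coeff (i + 1) (f ^ L) =
      ∑ l ∈ Finset.range (i + 1),
        (((l : R) + 1) * L + ((l : R) + 1) - ((i : R) + 1)) * coeff (l + 1) f *
          coeff (i - l) (f ^ L) := by
  have hderiv : f * (X * d⁄dX R (f ^ L)) = L • (X * d⁄dX R f * f ^ L) := by
    rw [mul_left_comm, mul_derivative_pow, mul_smul_comm, mul_assoc]
  have hcoeff := congrArg (coeff (i + 1)) hderiv
  rw [map_nsmul, coeff_mul, coeff_mul, nsmul_eq_mul, Finset.mul_sum,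
    ← sub_eq_zero, ← Finset.sum_sub_distrib, Finset.Nat.sum_antidiagonal_succ] at hcoeff
  simp only [coeff_X_mul_derivative, coeff_zero_eq_constantCoeff_apply] at hcoeff
  rw [Finset.Nat.sum_antidiagonal_eq_sum_range_succ_mk] at hcoeff
  rw [← sub_eq_zero, ← hcoeff, sub_eq_add_neg, ← Finset.sum_neg_distrib]
  congr 1
  · push_cast; ring
  · refine Finset.sum_congr rfl fun l hl => ?_
    rw [Nat.cast_sub (Nat.lt_succ_iff.1 (Finset.mem_range.1 hl))]
    push_cast; ring

end PowerSeries

theorem abs_coeff_pow_le {f : ℝ⟦X⟧} {g J : ℝ} (hJ : 0 ≤ J)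
    (hf : ∀ l, |coeff l f| ≤ g * J ^ l) (L i : ℕ) :
    |coeff i (f ^ L)| ≤ g ^ L * (L * J) ^ i := by
  have hg : 0 ≤ g := by simpa using (abs_nonneg _).trans (hf 0)
  induction L generalizing i with
  | zero => rcases i with _ | i <;> simp [coeff_one]
  | succ L ih =>
    rw [pow_succ, coeff_mul, Finset.Nat.sum_antidiagonal_eq_sum_range_succ_mk]
    have hgeom : ∑ k ∈ Finset.range (i + 1), (L : ℝ) ^ k ≤ (L + 1) ^ i := by
      rw [add_pow]
      refine Finset.sum_le_sum fun k hk => ?_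
      simpa using le_mul_of_one_le_right (by positivity)
        (Nat.one_le_cast.2 (Nat.choose_pos (Nat.lt_succ_iff.1 (Finset.mem_range.1 hk))))
    calc |∑ k ∈ Finset.range (i + 1), coeff k (f ^ L) * coeff (i - k) f|
        ≤ ∑ k ∈ Finset.range (i + 1), g ^ L * (L * J) ^ k * (g * J ^ (i - k)) := by
          refine (Finset.abs_sum_le_sum_abs _ _).trans (Finset.sum_le_sum fun k _ => ?_)
          rw [abs_mul]
          exact mul_le_mul (ih k) (hf _) (abs_nonneg _) (by positivity)
      _ = g ^ (L + 1) * J ^ i * ∑ k ∈ Finset.range (i + 1), (L : ℝ) ^ k := by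
          rw [Finset.mul_sum]
          refine Finset.sum_congr rfl fun k hk => ?_
          rw [← pow_mul_pow_sub J (Nat.lt_succ_iff.1 (Finset.mem_range.1 hk))]
          ring
      _ ≤ g ^ (L + 1) * J ^ i * (L + 1) ^ i := by gcongr
      _ = g ^ (L + 1) * ((L + 1 : ℕ) * J) ^ i := by rw [mul_pow]; push_cast; ring

noncomputable def gammaSeries (α μ c : ℝ) : ℝ⟦X⟧ :=
  mk fun l => Gamma (α * (l + μ)) * (-c) ^ l / l !

theorem coeff_gammaSeries (α μ c : ℝ) (l : ℕ) :
    coeff l (gammaSeries α μ c) = Gamma (α * (l + μ)) * (-c) ^ l / l ! :=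
  coeff_mk _ _

theorem abs_coeff_gammaSeries_le {α μ c : ℝ} (hα0 : 0 < α) (hα1 : α < 1) (hμ : 0 < μ)
    (hc : 0 ≤ c) (l : ℕ) :
    |coeff l (gammaSeries α μ c)| ≤ Gamma (α * μ) * (4 / 3 * Gamma (α * (1 + μ)) * c) ^ l := by
  have hg := three_quarters_le_Gamma (by positivity : 0 < α * μ)
  rw [coeff_gammaSeries]
  rcases l with _ | m
  · simp [abs_of_pos (Gamma_pos_of_pos (by positivity : 0 < α * μ))]
  set G := Gamma (α * (1 + μ))
  have hG : 0 < G := Gamma_pos_of_pos (by positivity)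
  have hchain : Gamma (α * ((m + 1 : ℕ) + μ)) ≤ (m + 1)! * (4 / 3 * G) ^ m * G := by
    convert Gamma_add_mul_le (by positivity : 0 < α * (1 + μ)) hα0 hα1 m using 2
    push_cast; ring
  rw [abs_div, abs_mul, abs_pow, abs_neg, abs_of_nonneg hc, Nat.abs_cast,
    abs_of_pos (Gamma_pos_of_pos (by positivity))]
  calc Gamma (α * ((m + 1 : ℕ) + μ)) * c ^ (m + 1) / (m + 1)!
      ≤ (m + 1)! * (4 / 3 * G) ^ m * G * c ^ (m + 1) / (m + 1)! := by gcongr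
    _ = 1 * (4 / 3 * G) ^ m * G * c ^ (m + 1) := by field_simp
    _ ≤ (4 / 3 * Gamma (α * μ)) * (4 / 3 * G) ^ m * G * c ^ (m + 1) := by
      gcongr; linarith
    _ = Gamma (α * μ) * (4 / 3 * G * c) ^ (m + 1) := by ring

theorem deltaCoef_eq_coeff_gammaSeries {α μ : ℝ} (rh : ℝ) (L : ℕ) (hg : Gamma (α * μ) ≠ 0)
    (i : ℕ) : deltaCoef α μ rh L i = coeff i (gammaSeries α μ (μ * rh ^ (-α)) ^ L) := by
  set f := gammaSeries α μ (μ * rh ^ (-α))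
  have hf0 : constantCoeff f = Gamma (α * μ) := by
    simp [f, ← coeff_zero_eq_constantCoeff_apply, coeff_gammaSeries]
  induction i using Nat.strong_induction_on with
  | _ i ih =>
    rcases i with _ | i
    · rw [deltaCoef, coeff_zero_eq_constantCoeff_apply, map_pow, hf0]
    have hsum : ∑ l ∈ Finset.range (i + 1), deltaCoef α μ rh L (i - l) *
          ((((l : ℝ) + 1) * L + ((l : ℝ) + 1) - ((i : ℝ) + 1)) * Gamma (α * ((l + 1) + μ)) *
            (-μ * rh ^ (-α)) ^ (l + 1) / (l + 1)!) =
        ∑ l ∈ Finset.range (i + 1), (((l : ℝ) + 1) * L + ((l : ℝ) + 1) - ((i : ℝ) + 1)) *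
          coeff (l + 1) f * coeff (i - l) (f ^ L) := by
      refine Finset.sum_congr rfl fun l _ => ?_
      rw [ih _ (by omega), coeff_gammaSeries]
      push_cast; ring
    rw [deltaCoef, hsum, ← PowerSeries.coeff_succ_pow_recurrence, hf0]
    field_simp

theorem abs_deltaCoef_le {α μ rh : ℝ} (hα0 : 0 < α) (hα1 : α < 1) (hμ : 0 < μ) (hrh : 0 ≤ rh)
    (L i : ℕ) :
    |deltaCoef α μ rh L i| ≤
      Gamma (α * μ) ^ L * (L * (4 / 3 * Gamma (α * (1 + μ)) * (μ * rh ^ (-α)))) ^ i := by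
  rw [deltaCoef_eq_coeff_gammaSeries rh L (Gamma_pos_of_pos (by positivity)).ne']
  exact abs_coeff_pow_le (by positivity) (abs_coeff_gammaSeries_le hα0 hα1 hμ (by positivity)) L i

theorem abs_deltaCoef_term_le {α μ rh r : ℝ} (hα0 : 0 < α) (hα1 : α < 1) (hμ : 0 < μ)
    (hrh : 0 < rh) (hr : 0 < r) (L n : ℕ) :
    |deltaCoef α μ rh L n * r ^ (α * n + α * μ * L) / Gamma (α * n + α * μ * L + 1)| ≤
      (2 / 3) ^ n * ((Gamma (α * μ) * r ^ (α * μ)) ^ L *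
        ((2 * μ * L * (r / rh) ^ α * Gamma (α * (1 + μ))) ^ n / Gamma (n * α + L * α * μ + 1))) := by
  have hΓ : 0 < Gamma (α * n + α * μ * L + 1) := Gamma_pos_of_pos (by positivity)
  have hsplit : r ^ (α * n + α * μ * L) = (r ^ α) ^ n * (r ^ (α * μ)) ^ L := by
    rw [rpow_add hr, ← rpow_natCast, ← rpow_natCast, ← rpow_mul hr.le, ← rpow_mul hr.le,
      mul_comm α (n : ℝ)]
  have hscale : L * (4 / 3 * Gamma (α * (1 + μ)) * (μ * rh ^ (-α))) * r ^ α =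
      2 / 3 * (2 * μ * L * (r / rh) ^ α * Gamma (α * (1 + μ))) := by
    rw [div_rpow hr.le hrh.le, rpow_neg hrh.le]; ring
  rw [show (n : ℝ) * α + L * α * μ + 1 = α * n + α * μ * L + 1 by ring, abs_div, abs_mul,
    abs_of_pos hΓ, hsplit, abs_of_pos (show 0 < (r ^ α) ^ n * (r ^ (α * μ)) ^ L by positivity)]
  calc |deltaCoef α μ rh L n| * ((r ^ α) ^ n * (r ^ (α * μ)) ^ L) / Gamma (α * n + α * μ * L + 1)
      ≤ Gamma (α * μ) ^ L * (L * (4 / 3 * Gamma (α * (1 + μ)) * (μ * rh ^ (-α)))) ^ n *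
          ((r ^ α) ^ n * (r ^ (α * μ)) ^ L) / Gamma (α * n + α * μ * L + 1) := by
        gcongr; exact abs_deltaCoef_le hα0 hα1 hμ hrh.le L n
    _ = Gamma (α * μ) ^ L * ((2 / 3 * (2 * μ * L * (r / rh) ^ α * Gamma (α * (1 + μ)))) ^ n *
          (r ^ (α * μ)) ^ L) / Gamma (α * n + α * μ * L + 1) := by rw [← hscale]; ring
    _ = _ := by rw [mul_pow]; ring

theorem abs_tsum_lt_tsum_of_abs_le {f g : ℕ → ℝ} (hg : Summable g) (hle : ∀ i, |f i| ≤ g i)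
    {j : ℕ} (hj : |f j| < g j) : |∑' i, f i| < ∑' i, g i :=
  (norm_tsum_le_tsum_norm (f := f) (.of_nonneg_of_le (fun _ => abs_nonneg _) hle hg)).trans_lt
    (Summable.tsum_lt_tsum_of_nonneg (fun _ => abs_nonneg _) hle hj hg)

theorem sum_cdf_truncation_bound_of_alpha_lt_one_general
    (α μ rh : ℝ) (hμ : 0 < μ) (hrh : 0 < rh) (hα0 : 0 < α) (hα1 : α < 1)
    (L : ℕ) (hL : 1 ≤ L) (r : ℝ) (hr : 0 < r) (N : ℕ) :
    |(α * μ ^ μ / (Real.Gamma μ * rh ^ (α * μ))) ^ L *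
        ∑' i : ℕ,
          deltaCoef α μ rh L (N + i) *
            r ^ (α * ((N : ℝ) + (i : ℝ)) + α * μ * (L : ℝ)) /
            Real.Gamma (α * ((N : ℝ) + (i : ℝ)) + α * μ * (L : ℝ) + 1)| <
      (α * μ ^ μ * Real.Gamma (α * μ) * (r / rh) ^ (α * μ) / Real.Gamma μ) ^ L *
        ∑' i : ℕ,
          (2 * μ * (L : ℝ) * (r / rh) ^ α * Real.Gamma (α * (1 + μ))) ^ (N + i) /
            Real.Gamma (((N : ℝ) + (i : ℝ)) * α + (L : ℝ) * α * μ + 1) := by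
  have hL' : (0 : ℝ) < L := by exact_mod_cast hL
  set K := 2 * μ * (L : ℝ) * (r / rh) ^ α * Gamma (α * (1 + μ))
  set C := (Gamma (α * μ) * r ^ (α * μ)) ^ L
  set u : ℕ → ℝ := fun i => K ^ (N + i) / Gamma (((N : ℝ) + i) * α + L * α * μ + 1)
  set f : ℕ → ℝ := fun i => deltaCoef α μ rh L (N + i) * r ^ (α * ((N : ℝ) + i) + α * μ * L) /
    Gamma (α * ((N : ℝ) + i) + α * μ * L + 1)
  have hu : Summable u := by
    refine ((summable_nat_add_iff N).2 (summable_pow_div_Gamma_mul_add K hα0 hα1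
      (by positivity : (0 : ℝ) < L * α * μ + 1))).congr fun i => ?_
    simp only [u, add_comm i N, Nat.cast_add, add_assoc]
  have hf : ∀ i, |f i| ≤ (2 / 3) ^ (N + i) * (C * u i) := fun i => by
    simpa using abs_deltaCoef_term_le hα0 hα1 hμ hrh hr L (N + i)
  have hlt : |∑' i, f i| < ∑' i, C * u i :=
    abs_tsum_lt_tsum_of_abs_le (hu.mul_left C)
      (fun i => (hf i).trans (mul_le_of_le_one_left (by positivity)
        (pow_le_one₀ (by norm_num) (by norm_num))))
      ((hf 1).trans_lt (mul_lt_of_lt_one_left (by positivity)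
        (pow_lt_one₀ (by norm_num) (by norm_num) (by omega))))
  have hprefactor : (α * μ ^ μ / (Gamma μ * rh ^ (α * μ))) ^ L * C =
      (α * μ ^ μ * Gamma (α * μ) * (r / rh) ^ (α * μ) / Gamma μ) ^ L := by
    rw [← mul_pow, div_rpow hr.le hrh.le]
    field_simp
  calc |(α * μ ^ μ / (Gamma μ * rh ^ (α * μ))) ^ L * ∑' i, f i|
      = (α * μ ^ μ / (Gamma μ * rh ^ (α * μ))) ^ L * |∑' i, f i| := by
        rw [abs_mul, abs_of_nonneg (by positivity)]
    _ < (α * μ ^ μ / (Gamma μ * rh ^ (α * μ))) ^ L * ∑' i, C * u i := by gcongr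
    _ = _ := by rw [tsum_mul_left, ← mul_assoc, hprefactor]

/-- Truncation-error bound for the sum-CDF series, case 0 < α < 1. -/
theorem sum_cdf_truncation_bound_of_alpha_lt_one
    (α μ rh : ℝ) (hμ : 0 < μ) (hrh : 0 < rh) (hα0 : 0 < α) (hα1 : α < 1)
    (L : ℕ) (hL : 1 ≤ L) (r : ℝ) (hr : 0 < r) (N : ℕ) (hN : 1 ≤ N) :
    |(α * μ ^ μ / (Real.Gamma μ * rh ^ (α * μ))) ^ L *
        ∑' i : ℕ,
          deltaCoef α μ rh L (N + i) *
            r ^ (α * ((N : ℝ) + (i : ℝ)) + α * μ * (L : ℝ)) /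
            Real.Gamma (α * ((N : ℝ) + (i : ℝ)) + α * μ * (L : ℝ) + 1)| <
      (α * μ ^ μ * Real.Gamma (α * μ) * (r / rh) ^ (α * μ) / Real.Gamma μ) ^ L *
        ∑' i : ℕ,
          (2 * μ * (L : ℝ) * (r / rh) ^ α * Real.Gamma (α * (1 + μ))) ^ (N + i) /
            Real.Gamma (((N : ℝ) + (i : ℝ)) * α + (L : ℝ) * α * μ + 1) :=
  sum_cdf_truncation_bound_of_alpha_lt_one_general α μ rh hμ hrh hα0 hα1 L hL r hr N
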